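/- Let T be a Trémaux tree of a connected graph G. There exists a TT-precedence order, i.e., a partial order ≺* on the edges of G such that for every vertex v and every pair of edges e, f outgoing from v: if low(e) ≺ low(f) then e ≺* f, and if low(e) = low(f) and f is a thick tree edge while e is not, then e ≺* f. -/

import Mathlib

variable {V : Type*}

/-- Tree order: `x ⪯ y` iff `x` lies on the unique `T`-path from the root `r` to `y`. -/
def tle (T : SimpleGraph V) (r x y : V) : Prop :=
  ∃ p : T.Walk r y, p.IsPath ∧ x ∈ p.support

/-- Strict tree order. -/
def stle (T : SimpleGraph V) (r x y : V) : Prop :=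
  tle T r x y ∧ x ≠ y

/-- `T` is a Trémaux tree of `G` rooted at `r`. -/
def IsTremaux (G T : SimpleGraph V) (r : V) : Prop :=
  T ≤ G ∧ T.IsTree ∧ ∀ x y, G.Adj x y → tle T r x y ∨ tle T r y x

/-- A back edge (non-tree edge), oriented downward: `a` is the upper endpoint, `b ≺ a`. -/
def BackEdge (G T : SimpleGraph V) (r a b : V) : Prop :=
  G.Adj a b ∧ ¬ T.Adj a b ∧ stle T r b a

/-- The set of which `low v` is the minimum: `v` together with all vertices joined
by a non-tree edge to a descendant of `v`. -/
def lowSet (G T : SimpleGraph V) (r v : V) : Set V :=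
  {v} ∪ {u | ∃ w, tle T r v w ∧ G.Adj u w ∧ ¬ T.Adj u w}

/-- `l` is the low point of the vertex `v`. -/
def IsLow (G T : SimpleGraph V) (r v l : V) : Prop :=
  l ∈ lowSet G T r v ∧ ∀ u ∈ lowSet G T r v, tle T r l u

/-- The edge from `v` to `w` is an edge going out of `v`: either a tree edge going up,
or a back edge going down. -/
def OutEdge (G T : SimpleGraph V) (r v w : V) : Prop :=
  (T.Adj v w ∧ stle T r v w) ∨ BackEdge G T r v w

/-- The back edge `(a,b)` lies above the edge `(v,w)` going out of `v`
(i.e. `f ⪰ e` in the order extended to edges). -/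
def AboveE (T : SimpleGraph V) (r v w a b : V) : Prop :=
  (T.Adj v w ∧ tle T r w a) ∨ (¬ T.Adj v w ∧ a = v ∧ b = w)

/-- Membership in the fringe of the edge `(v,w)` going out of `v`:
back edges `f = (a,b) ⪰ e` with `low f = b ≺ v`. -/
def InFringe (G T : SimpleGraph V) (r v w a b : V) : Prop :=
  BackEdge G T r a b ∧ AboveE T r v w a b ∧ stle T r b v

/-- The set of which `low e` is the minimum, for an edge `e = (v,w)` going out of `v`. -/
def lowESet (G T : SimpleGraph V) (r v w : V) : Set V :=
  {u | (T.Adj v w ∧ (u = v ∨ u ∈ lowSet G T r w)) ∨ (¬ T.Adj v w ∧ u = w)}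

/-- `l` is the low point of the edge `(v,w)` going out of `v`. -/
def IsLowE (G T : SimpleGraph V) (r v w l : V) : Prop :=
  l ∈ lowESet G T r v w ∧ ∀ u ∈ lowESet G T r v w, tle T r l u

/-- Membership in `Interlaced(e₁, e₂)` where `e₁ = (v,w₁)` and `l₂ = low e₂`:
back edges in the fringe of `e₁` whose low is strictly above `l₂`. -/
def InInterlaced (G T : SimpleGraph V) (r v w₁ l₂ a b : V) : Prop :=
  InFringe G T r v w₁ a b ∧ stle T r l₂ b

/-- `c` is an F-coloring of the back edges of `(G,T)` by `{-1,+1}`. -/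
def FColoring (G T : SimpleGraph V) (r : V) (c : V → V → ℤ) : Prop :=
  (∀ a b, BackEdge G T r a b → c a b = 1 ∨ c a b = -1) ∧
  ∀ v w₁ w₂ l₁ l₂, OutEdge G T r v w₁ → OutEdge G T r v w₂ → w₁ ≠ w₂ →
    IsLowE G T r v w₁ l₁ → IsLowE G T r v w₂ l₂ →
    (∀ a b a' b', InInterlaced G T r v w₁ l₂ a b →
        InInterlaced G T r v w₁ l₂ a' b' → c a b = c a' b') ∧
    (∀ a b a' b', InInterlaced G T r v w₂ l₁ a b →
        InInterlaced G T r v w₂ l₁ a' b' → c a b = c a' b') ∧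
    (∀ a b a' b', InInterlaced G T r v w₁ l₂ a b →
        InInterlaced G T r v w₂ l₁ a' b' → c a b ≠ c a' b')

/-- A strong F-coloring additionally makes each low set `L(v)` monochromatic. -/
def StrongAtLows (G T : SimpleGraph V) (r : V) (c : V → V → ℤ) : Prop :=
  ∀ v l, IsLow G T r v l →
    ∀ a b a' b', BackEdge G T r a b → tle T r v a → b = l →
      BackEdge G T r a' b' → tle T r v a' → b' = l → c a b = c a' b'

/-- `H` is a minor of `G` (branch-set formulation). -/
def IsMinorOf {W V : Type*} (H : SimpleGraph W) (G : SimpleGraph V) : Prop :=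
  ∃ ρ : V → Option W,
    (∀ w, ∃ v, ρ v = some w) ∧
    (∀ w, (G.induce {v | ρ v = some w}).Connected) ∧
    (∀ w₁ w₂, H.Adj w₁ w₂ → ∃ v₁ v₂, ρ v₁ = some w₁ ∧ ρ v₂ = some w₂ ∧ G.Adj v₁ v₂)

/-- Planarity (Kuratowski–Wagner characterization): no `K₅` and no `K₃,₃` minor. -/
def Planar (G : SimpleGraph V) : Prop :=
  ¬ IsMinorOf (SimpleGraph.completeGraph (Fin 5)) G ∧
  ¬ IsMinorOf (completeBipartiteGraph (Fin 3) (Fin 3)) G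

/-- The tree edge `(v,w)` going out of `v` is thick. -/
def ThickE (G T : SimpleGraph V) (r v w : V) : Prop :=
  T.Adj v w ∧ stle T r v w ∧ ∃ l, IsLow G T r w l ∧ stle T r l v ∧
    ∃ a b, BackEdge G T r a b ∧ tle T r w a ∧ stle T r l b ∧ stle T r b v

/-!
Rank an edge going out of `v` by twice the depth of its low point, plus one if it is thick, and
order edges by rank. Strict tree order strictly increases depth, so a lower low point gives a
smaller rank, and for equal low points the thickness bit decides. An edge `{v, w}` goes out of at
most one of its endpoints, so the rank is well defined on unordered edges.
-/

section TremauxTree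

variable {G T : SimpleGraph V} {r : V}

lemma dist_lt_of_stle (hT : T.IsTree) {x y : V} (h : stle T r x y) :
    T.dist r x < T.dist r y := by
  classical
  obtain ⟨⟨p, hp, hx⟩, hne⟩ := h
  have hlen : (p.takeUntil x hx).length + (p.dropUntil x hx).length = p.length := by
    rw [← SimpleGraph.Walk.length_append, p.take_spec hx]
  have hdist_x : T.dist r x ≤ (p.takeUntil x hx).length := SimpleGraph.dist_le _
  have hdrop : (p.dropUntil x hx).length ≠ 0 := fun h0 =>
    hne (SimpleGraph.Walk.eq_of_length_eq_zero h0)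
  obtain ⟨q, hq, hql⟩ := hT.connected.exists_path_of_dist r y
  have hdist_y : p.length = T.dist r y :=
    hql ▸ congrArg _ ((hT.existsUnique_path r y).unique hp hq)
  omega

lemma tle_antisymm (hT : T.IsTree) {x y : V} (hxy : tle T r x y) (hyx : tle T r y x) : x = y := by
  by_contra hne
  have := dist_lt_of_stle hT ⟨hxy, hne⟩
  have := dist_lt_of_stle hT ⟨hyx, Ne.symm hne⟩
  omega

lemma stle_asymm (hT : T.IsTree) {x y : V} (hxy : stle T r x y) (hyx : stle T r y x) : False :=
  hxy.2 (tle_antisymm hT hxy.1 hyx.1)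

lemma OutEdge.not_symm (hT : T.IsTree) {v w : V} (hvw : OutEdge G T r v w) :
    ¬ OutEdge G T r w v := by
  rintro hwv
  rcases hvw with ⟨hadj, hs⟩ | ⟨-, hnadj, hs⟩ <;>
    rcases hwv with ⟨hadj', hs'⟩ | ⟨-, hnadj', hs'⟩
  · exact stle_asymm hT hs hs'
  · exact hnadj' hadj.symm
  · exact hnadj hadj'.symm
  · exact stle_asymm hT hs hs'

lemma IsLowE.unique (hT : T.IsTree) {v w l l' : V} (hl : IsLowE G T r v w l)
    (hl' : IsLowE G T r v w l') : l = l' :=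
  tle_antisymm hT (hl.2 l' hl'.1) (hl'.2 l hl.1)

end TremauxTree

open Classical in
noncomputable def lowDepth (G T : SimpleGraph V) (r v w : V) : ℕ :=
  if h : ∃ l, IsLowE G T r v w l then T.dist r h.choose else 0

open Classical in
noncomputable def outEdgeRank (G T : SimpleGraph V) (r v w : V) : ℕ :=
  if OutEdge G T r v w then 2 * lowDepth G T r v w + (if ThickE G T r v w then 1 else 0) else 0

noncomputable def edgeRank (G T : SimpleGraph V) (r : V) : Sym2 V → ℕ :=
  Sym2.lift ⟨fun v w => outEdgeRank G T r v w + outEdgeRank G T r w v, fun _ _ => add_comm _ _⟩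

open Classical in
lemma edgeRank_mk {G T : SimpleGraph V} {r v w l : V} (hT : T.IsTree) (ho : OutEdge G T r v w)
    (hl : IsLowE G T r v w l) :
    edgeRank G T r s(v, w) = 2 * T.dist r l + if ThickE G T r v w then 1 else 0 := by
  have hex : ∃ l, IsLowE G T r v w l := ⟨l, hl⟩
  have hdepth : lowDepth G T r v w = T.dist r l := by
    rw [lowDepth, dif_pos hex, hex.choose_spec.unique hT hl]
  simp only [edgeRank, Sym2.lift_mk, outEdgeRank, if_pos ho, if_neg (ho.not_symm hT), hdepth,
    add_zero]

theorem stmt15_general (G T : SimpleGraph V) (r : V)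
    (h : IsTremaux G T r) :
    ∃ R : Sym2 V → Sym2 V → Prop, IsStrictOrder (Sym2 V) R ∧
      ∀ v w₁ w₂ l₁ l₂, OutEdge G T r v w₁ → OutEdge G T r v w₂ →
        IsLowE G T r v w₁ l₁ → IsLowE G T r v w₂ l₂ →
        (stle T r l₁ l₂ → R s(v, w₁) s(v, w₂)) ∧
        (l₁ = l₂ → ThickE G T r v w₂ → ¬ ThickE G T r v w₁ →
          R s(v, w₁) s(v, w₂)) := by
  obtain ⟨-, hT, -⟩ := h
  refine ⟨edgeRank G T r ⁻¹'o (· < ·), inferInstance, ?_⟩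
  intro v w₁ w₂ l₁ l₂ ho₁ ho₂ hl₁ hl₂
  simp only [Order.Preimage, edgeRank_mk hT ho₁ hl₁, edgeRank_mk hT ho₂ hl₂]
  refine ⟨fun hlt => ?_, fun heq hthick₂ hthin₁ => ?_⟩
  · have := dist_lt_of_stle hT hlt
    split_ifs <;> omega
  · simp only [heq, if_pos hthick₂, if_neg hthin₁]
    omega

/-- there exists a TT-precedence order on the edges of `G`. -/
theorem stmt15 [Fintype V] (G T : SimpleGraph V) (r : V)
    (h : IsTremaux G T r) :
    ∃ R : Sym2 V → Sym2 V → Prop, IsStrictOrder (Sym2 V) R ∧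
      ∀ v w₁ w₂ l₁ l₂, OutEdge G T r v w₁ → OutEdge G T r v w₂ →
        IsLowE G T r v w₁ l₁ → IsLowE G T r v w₂ l₂ →
        (stle T r l₁ l₂ → R s(v, w₁) s(v, w₂)) ∧
        (l₁ = l₂ → ThickE G T r v w₂ → ¬ ThickE G T r v w₁ →
          R s(v, w₁) s(v, w₂)) :=
  stmt15_general G T r h
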